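/- arXiv:2405.07365 — 6 statements merged into one kernel-verified Lean document; each statement's English description precedes it below -/
import Mathlib

section
/- For a finite simple graph G on vertex set [n] and a subset S of vertices, define the height function h(S) = |S| + n - c(S), where c(S) is the number of connected components of the induced subgraph on the complement of S. If G is connected and S is a nonempty subset with h(S) ≤ h(T) for all subsets T of V(G), then removing S disconnects G, i.e., the induced subgraph on V(G)\S has at least 2 connected components. -/
/-- The number of connected components of the subgraph of `G` induced on the
complement of the vertex subset `S`. -/
noncomputable def numComp {V : Type} (G : SimpleGraph V) (S : Finset V) : ℕ :=
  Nat.card ((G.induce ((S : Set V))ᶜ).ConnectedComponent)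

lemma numComp_empty {V : Type} (G : SimpleGraph V) (hconn : G.Connected) :
    numComp G ∅ = 1 := by
  have hiso : (G.induce (((∅ : Finset V) : Set V))ᶜ) ≃g G := by
    have : (((∅ : Finset V) : Set V))ᶜ = Set.univ := by simp
    rw [this]
    exact G.induceUnivIso
  have hc : (G.induce (((∅ : Finset V) : Set V))ᶜ).Connected :=
    (hiso.connected_iff).mpr hconn
  have hne : Nonempty ((G.induce (((∅ : Finset V) : Set V))ᶜ).ConnectedComponent) :=
    ⟨SimpleGraph.connectedComponentMk _ hc.nonempty.some⟩
  have hsub : Subsingleton ((G.induce (((∅ : Finset V) : Set V))ᶜ).ConnectedComponent) := by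
    constructor
    intro a b
    refine SimpleGraph.ConnectedComponent.ind₂ (fun v w => ?_) a b
    exact SimpleGraph.ConnectedComponent.sound (hc.preconnected v w)
  unfold numComp
  exact Nat.card_eq_one_iff_unique.mpr ⟨hsub, hne⟩

/-- If `G` is a connected graph on `[n]` and `S` is a nonempty subset minimizing
`h(S) = |S| + n - c(S)`, then removing `S` disconnects `G`. -/
theorem stmt0 (n : ℕ) (G : SimpleGraph (Fin n)) (hconn : G.Connected)
    (S : Finset (Fin n)) (hS : S.Nonempty)
    (hmin : ∀ T : Finset (Fin n),
      (S.card : ℤ) + n - numComp G S ≤ (T.card : ℤ) + n - numComp G T) :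
    2 ≤ numComp G S := by
  have h := hmin ∅
  rw [numComp_empty G hconn] at h
  have hcard : 1 ≤ (S.card : ℤ) := by exact_mod_cast hS.card_pos
  push_cast [Finset.card_empty] at h
  have : (2 : ℤ) ≤ (numComp G S : ℤ) := by linarith
  exact_mod_cast this
end

section
/- Let G be a finite simple graph, S ⊆ V(G), and v ∈ V(G)\S a simplicial vertex of G (its neighborhood forms a clique). Then |S+v| + n - c(S+v) > |S| + n - c(S), where S+v = S ∪ {v} and c(X) is the number of connected components of the induced subgraph on V(G)\X. Consequently, no height-minimizing set S contains a simplicial vertex. -/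
-- walk surgery lemma
theorem walk_avoid {n : ℕ} (G : SimpleGraph (Fin n)) (v : Fin n)
    (hv : ∀ a b, G.Adj v a → G.Adj v b → a ≠ b → G.Adj a b)
    (A B : Set (Fin n)) (hB : ∀ x, x ∈ B ↔ x ∈ A ∧ x ≠ v) :
    ∀ (k : ℕ) (a b : A) (w : (G.induce A).Walk a b), w.length ≤ k →
      ∀ (ha : (a : Fin n) ≠ v) (hb : (b : Fin n) ≠ v),
      (G.induce B).Reachable ⟨a, (hB a).2 ⟨a.2, ha⟩⟩ ⟨b, (hB b).2 ⟨b.2, hb⟩⟩ := by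
  intro k
  induction k with
  | zero =>
    intro a b w hw ha hb
    cases w with
    | nil => rfl
    | cons h w' => simp at hw
  | succ k ih =>
    intro a b w hw ha hb
    cases w with
    | nil => rfl
    | @cons _ c _ h w' =>
      by_cases hc : (c : Fin n) = v
      · -- next vertex is v; walk must continue
        cases w' with
        | nil => exact absurd hc hb
        | @cons _ d _ h2 w'' =>
          have hdv : (d : Fin n) ≠ v := by
            intro hd
            have hcd : c = d := Subtype.ext (hc.trans hd.symm)
            exact (G.induce A).irrefl (hcd ▸ h2)
          have hlen : w''.length ≤ k := by
            simp [SimpleGraph.Walk.length_cons] at hw; omega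
          have hrest := ih d b w'' hlen hdv hb
          have hva : G.Adj v (a : Fin n) := by
            have : G.Adj (a : Fin n) (c : Fin n) := h
            rw [hc] at this; exact this.symm
          have hvd : G.Adj v (d : Fin n) := by
            have : G.Adj (c : Fin n) (d : Fin n) := h2
            rwa [hc] at this
          by_cases had : (a : Fin n) = (d : Fin n)
          · have : (⟨(a : Fin n), (hB a).2 ⟨a.2, ha⟩⟩ : B) =
                ⟨(d : Fin n), (hB d).2 ⟨d.2, hdv⟩⟩ := Subtype.ext had
            rw [this]; exact hrest
          · have hadj : (G.induce B).Adj ⟨(a : Fin n), (hB a).2 ⟨a.2, ha⟩⟩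
                ⟨(d : Fin n), (hB d).2 ⟨d.2, hdv⟩⟩ := hv _ _ hva hvd had
            exact (hadj.reachable).trans hrest
      · have hlen : w'.length ≤ k := by
          simp [SimpleGraph.Walk.length_cons] at hw; omega
        have hrest := ih c b w' hlen hc hb
        have hadj : (G.induce B).Adj ⟨(a : Fin n), (hB a).2 ⟨a.2, ha⟩⟩
            ⟨(c : Fin n), (hB c).2 ⟨c.2, hc⟩⟩ := h
        exact (hadj.reachable).trans hrest


/-- A vertex is simplicial if its neighbors form a clique. -/
def IsSimplicial {V : Type} (G : SimpleGraph V) (v : V) : Prop :=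
  ∀ a b, G.Adj v a → G.Adj v b → a ≠ b → G.Adj a b

theorem numComp_aux {n : ℕ} (G : SimpleGraph (Fin n)) (v : Fin n)
    (hv : ∀ a b, G.Adj v a → G.Adj v b → a ≠ b → G.Adj a b)
    (S : Finset (Fin n)) :
    Nat.card ((G.induce (((insert v S : Finset (Fin n)) : Set (Fin n))ᶜ)).ConnectedComponent) ≤
    Nat.card ((G.induce (((S : Finset (Fin n)) : Set (Fin n))ᶜ)).ConnectedComponent) := by
  set A : Set (Fin n) := ((S : Set (Fin n)))ᶜ with hA
  set B : Set (Fin n) := (((insert v S : Finset (Fin n)) : Set (Fin n)))ᶜ with hBdef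
  have hB : ∀ x, x ∈ B ↔ x ∈ A ∧ x ≠ v := by
    intro x
    simp [hBdef, hA, and_comm]
  have hBA : ∀ x, x ∈ B → x ∈ A := fun x hx => ((hB x).1 hx).1
  let hom : G.induce B →g G.induce A :=
    ⟨fun x => ⟨x.1, hBA _ x.2⟩, fun h => h⟩
  let f : (G.induce B).ConnectedComponent → (G.induce A).ConnectedComponent :=
    SimpleGraph.ConnectedComponent.map hom
  have hf : Function.Injective f := by
    intro c1 c2 hc
    induction c1 using SimpleGraph.ConnectedComponent.ind with
    | _ x =>
    induction c2 using SimpleGraph.ConnectedComponent.ind with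
    | _ y =>
    simp only [f, SimpleGraph.ConnectedComponent.map_mk] at hc
    rw [SimpleGraph.ConnectedComponent.eq] at hc ⊢
    obtain ⟨w⟩ := hc
    have hx : (x : Fin n) ≠ v := ((hB _).1 x.2).2
    have hy : (y : Fin n) ≠ v := ((hB _).1 y.2).2
    have := walk_avoid G v hv A B hB w.length (hom x) (hom y) w le_rfl hx hy
    have ex : (⟨((hom x) : Fin n), (hB _).2 ⟨(hom x).2, hx⟩⟩ : B) = x := Subtype.ext rfl
    have ey : (⟨((hom y) : Fin n), (hB _).2 ⟨(hom y).2, hy⟩⟩ : B) = y := Subtype.ext rfl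
    rwa [ex, ey] at this
  haveI : Finite ((G.induce A).ConnectedComponent) :=
    Finite.of_surjective (G.induce A).connectedComponentMk
      (fun c => c.exists_rep)
  exact Nat.card_le_card_of_injective f hf


/-- Adding a simplicial vertex to a subset strictly increases the height
`|S| + n - c(S)`; consequently no height-minimizing set contains a simplicial
vertex. -/
theorem stmt2 (n : ℕ) (G : SimpleGraph (Fin n)) (v : Fin n)
    (hv : IsSimplicial G v) :
    (∀ S : Finset (Fin n), v ∉ S →
      (S.card : ℤ) + n - numComp G S <
        ((insert v S).card : ℤ) + n - numComp G (insert v S)) ∧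
    (∀ S : Finset (Fin n),
      (∀ T : Finset (Fin n),
        (S.card : ℤ) + n - numComp G S ≤ (T.card : ℤ) + n - numComp G T) →
      v ∉ S) := by
  have key : ∀ S : Finset (Fin n), v ∉ S →
      (S.card : ℤ) + n - numComp G S <
        ((insert v S).card : ℤ) + n - numComp G (insert v S) := by
    intro S hvS
    have hcard : (insert v S).card = S.card + 1 := Finset.card_insert_of_notMem hvS
    have hle : numComp G (insert v S) ≤ numComp G S := numComp_aux G v hv S
    unfold numComp at *
    rw [hcard]
    push_cast
    omega
  refine ⟨key, ?_⟩
  intro S hmin hvS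
  have h1 := key (S.erase v) (Finset.notMem_erase v S)
  rw [Finset.insert_erase hvS] at h1
  have h2 := hmin (S.erase v)
  omega
end

section
/- The elements f_i = x_i y_{i+1} - x_{i+1} y_i, for 1 ≤ i < n, form a regular sequence in the polynomial ring K[x_1,...,x_n,y_1,...,y_n]. -/
/-!
Generalise the path so that its first vertex has constant coordinates `(b, c)` in an arbitrary
coefficient ring `A`, where `b` and `c` have no common annihilator, and induct on the number of
remaining vertices. Moving the next pair of variables `x₀, y₀` into the coefficients as `u, v`
turns the first generator into the form `b v - c u` over `A[u][v]`. This form is a nonzerodivisor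
(McCoy's theorem), and in `A[u][v] ⧸ (b v - c u)` the images of `u` and `v` again have no common
annihilator, so modulo the first generator the rest of the sequence is the same kind of path,
one vertex shorter, with first vertex `(u, v)`. The theorem is the case `A = K[u][v]`,
`(b, c) = (u, v)`.
-/

open MvPolynomial RingTheory.Sequence Pointwise

open scoped Polynomial

section Transport

variable {R S : Type*} [CommRing R] [CommRing S]

theorem RingEquiv.isRegular_map_iff (e : R ≃+* S) (l : List R) :
    IsRegular S (l.map e) ↔ IsRegular R l :=
  (AddEquiv.isRegular_congr (e := e.toAddEquiv) <| List.forall₂_map_right_iff.mpr <|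
    List.forall₂_same.mpr fun r _ x ↦ map_mul e r x).symm

theorem isRegular_cons_iff_of_ker_eq {π : R →+* S} (hπ : Function.Surjective π) {r : R}
    (hker : RingHom.ker π = Ideal.span {r}) (l : List R) :
    IsRegular R (r :: l) ↔ IsSMulRegular R r ∧ IsRegular S (l.map π) := by
  have hsmul : (r • ⊤ : Submodule R R) = RingHom.ker π := by
    rw [hker, ← Submodule.ideal_span_singleton_smul, smul_eq_mul, Ideal.mul_top]
  let e : QuotSMulTop r R ≃+ S :=
    (Submodule.quotEquivOfEq _ _ hsmul).toAddEquiv.trans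
      (RingHom.quotientKerEquivOfSurjective hπ).toAddEquiv
  rw [isRegular_cons_iff]
  refine and_congr_right fun _ ↦ AddEquiv.isRegular_congr (e := e) <|
    List.forall₂_map_right_iff.mpr <| List.forall₂_same.mpr fun a _ x ↦ ?_
  obtain ⟨y, rfl⟩ := Submodule.Quotient.mk_surjective _ x
  exact map_mul π a y

end Transport

section NoCommonAnnihilator

variable {A : Type*} [CommRing A]

def NoCommonAnnihilator (b c : A) : Prop :=
  ∀ g : A, g * b = 0 → g * c = 0 → g = 0

theorem NoCommonAnnihilator.C {b c : A} (h : NoCommonAnnihilator b c) :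
    NoCommonAnnihilator (Polynomial.C b) (Polynomial.C c) := fun g hb hc ↦
  Polynomial.ext fun j ↦ h _ (by simpa using congr(Polynomial.coeff $hb j))
    (by simpa using congr(Polynomial.coeff $hc j))

end NoCommonAnnihilator

namespace Polynomial

variable {A : Type*} [CommRing A]

/-- The form `b v - c u` on `A[u][v]`, encoded as `A[X][X]` with `u = C X` and `v = X`. -/
noncomputable def minorUV (b c : A) : A[X][X] :=
  C (C b) * X - C X * C (C c)

theorem isSMulRegular_minorUV {b c : A} (h : NoCommonAnnihilator b c) :
    IsSMulRegular A[X][X] (minorUV b c) := by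
  suffices hmem : minorUV b c ∈ nonZeroDivisors A[X][X] from
    IsSMulRegular.of_right_eq_zero_of_smul fun x hx ↦ (_root_.mem_nonZeroDivisors_iff.mp hmem).1 x hx
  refine Polynomial.mem_nonZeroDivisors_iff.mpr fun a ha ↦ ?_
  have hf : a • minorUV b c = C (a * C b) * X - C (X * (a * C c)) := by
    simp only [minorUV, smul_eq_C_mul, map_mul]; ring
  rw [hf] at ha
  have hb : a * C b = 0 := by simpa using congr(coeff $ha 1)
  have hc : X * (a * C c) = 0 := by simpa using congr(coeff $ha 0)
  exact h.C a hb (monic_X.mul_right_eq_zero_iff.mp hc)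

theorem C_X_mul_eq_zero_iff {p : A[X][X]} : C X * p = 0 ↔ p = 0 := by
  refine ⟨fun h ↦ Polynomial.ext fun j ↦ ?_, fun h ↦ by rw [h, mul_zero]⟩
  simpa [monic_X.mul_right_eq_zero_iff] using congr(coeff $h j)

theorem minorUV_dvd_of_dvd_mul {b c : A} (h : NoCommonAnnihilator b c) {g : A[X][X]}
    (hu : minorUV b c ∣ g * C X) (hv : minorUV b c ∣ g * X) : minorUV b c ∣ g := by
  obtain ⟨p, hp⟩ := hu
  obtain ⟨q, hq⟩ := hv
  have hpq : p * X = q * C X := by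
    refine sub_eq_zero.mp <| (isSMulRegular_minorUV h).right_eq_zero_of_smul ?_
    rw [smul_eq_mul]
    linear_combination C X * hq - X * hp
  obtain ⟨w, rfl⟩ : C X ∣ p := (C_dvd_iff_dvd_coeff _ _).mpr fun i ↦
    ⟨q.coeff (i + 1), by simpa [mul_comm] using congr(coeff $hpq (i + 1))⟩
  refine ⟨w, sub_eq_zero.mp <| C_X_mul_eq_zero_iff.mp ?_⟩
  linear_combination hp

theorem noCommonAnnihilator_mk_minorUV {b c : A} (h : NoCommonAnnihilator b c) :
    NoCommonAnnihilator (Ideal.Quotient.mk (Ideal.span {minorUV b c}) (C X))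
      (Ideal.Quotient.mk (Ideal.span {minorUV b c}) X) := by
  intro g hu hv
  obtain ⟨g, rfl⟩ := Ideal.Quotient.mk_surjective g
  simp only [← map_mul, Ideal.Quotient.eq_zero_iff_mem, Ideal.mem_span_singleton] at hu hv ⊢
  exact minorUV_dvd_of_dvd_mul h hu hv

theorem nontrivial_quotient_minorUV [Nontrivial A] (b c : A) :
    Nontrivial (A[X][X] ⧸ Ideal.span {minorUV b c}) := by
  refine Ideal.Quotient.nontrivial_iff.mpr fun htop ↦ ?_
  have hunit := (Ideal.span_singleton_eq_top.mp htop).map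
    ((evalRingHom (0 : A)).comp (evalRingHom (0 : A[X])))
  simp [minorUV] at hunit

theorem noCommonAnnihilator_C_X_X : NoCommonAnnihilator (C X : A[X][X]) X :=
  fun _ _ h ↦ monic_X.mul_left_eq_zero_iff.mp h

end Polynomial

section PathMinors

variable {R S : Type*} [CommRing R] [CommRing S]

def pathMinors {m : ℕ} (x y : Fin (m + 1) → R) : List R :=
  List.ofFn fun i : Fin m ↦ x i.castSucc * y i.succ - x i.succ * y i.castSucc

theorem map_pathMinors {F : Type*} [FunLike F R S] [RingHomClass F R S] (f : F) {m : ℕ}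
    (x y : Fin (m + 1) → R) : (pathMinors x y).map f = pathMinors (f ∘ x) (f ∘ y) := by
  simp [pathMinors, List.map_ofFn, Function.comp_def]

theorem pathMinors_cons {m : ℕ} (a b : R) (x y : Fin (m + 1) → R) :
    pathMinors (Fin.cons a x : Fin (m + 2) → R) (Fin.cons b y) =
      (a * y 0 - x 0 * b) :: pathMinors x y := by
  simp [pathMinors, List.ofFn_succ]

end PathMinors

namespace MvPolynomial

theorem ker_map_mk_span_singleton {A σ : Type*} [CommRing A] (a : A) :
    RingHom.ker (map (Ideal.Quotient.mk (Ideal.span {a})) : MvPolynomial σ A →+* _) =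
      Ideal.span {C a} := by
  rw [ker_map, Ideal.mk_ker, Ideal.map_span, Set.image_singleton]

variable (A : Type*) [CommRing A] (m : ℕ)

noncomputable def peelFirstHom :
    MvPolynomial (Fin (m + 1) ⊕ Fin (m + 1)) A →+* MvPolynomial (Fin m ⊕ Fin m) A[X][X] :=
  eval₂Hom (C.comp (Polynomial.C.comp Polynomial.C))
    (Sum.elim (Fin.cons (C (Polynomial.C Polynomial.X)) (X ∘ Sum.inl))
      (Fin.cons (C Polynomial.X) (X ∘ Sum.inr)))

noncomputable def peelFirst :
    MvPolynomial (Fin (m + 1) ⊕ Fin (m + 1)) A ≃+* MvPolynomial (Fin m ⊕ Fin m) A[X][X] :=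
  let evalFirst : A[X][X] →+* MvPolynomial (Fin (m + 1) ⊕ Fin (m + 1)) A :=
    Polynomial.eval₂RingHom (Polynomial.eval₂RingHom C (X (Sum.inl 0))) (X (Sum.inr 0))
  RingEquiv.ofRingHom (peelFirstHom A m)
    (eval₂Hom evalFirst (Sum.elim (X ∘ Sum.inl ∘ Fin.succ) (X ∘ Sum.inr ∘ Fin.succ)))
    (by
      refine ringHom_ext (fun p ↦ ?_) (by rintro (i | i) <;> simp [peelFirstHom])
      suffices h : (peelFirstHom A m).comp evalFirst = C by simpa using RingHom.congr_fun h p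
      exact Polynomial.ringHom_ext'
        (Polynomial.ringHom_ext (fun a ↦ by simp [peelFirstHom, evalFirst])
          (by simp [peelFirstHom, evalFirst]))
        (by simp [peelFirstHom, evalFirst]))
    (by
      refine ringHom_ext (fun a ↦ by simp [peelFirstHom, evalFirst]) ?_
      rintro (i | i) <;> induction i using Fin.cases <;> simp [peelFirstHom, evalFirst])

variable {A m}

theorem peelFirst_C (a : A) : peelFirst A m (C a) = C (Polynomial.C (Polynomial.C a)) := by
  simp [peelFirst, peelFirstHom]

theorem peelFirst_comp_X_inl : peelFirst A m ∘ X ∘ Sum.inl =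
    Fin.cons (C (Polynomial.C Polynomial.X) : MvPolynomial (Fin m ⊕ Fin m) A[X][X])
      (X ∘ Sum.inl) := by
  ext1 i; simp [peelFirst, peelFirstHom]

theorem peelFirst_comp_X_inr : peelFirst A m ∘ X ∘ Sum.inr =
    Fin.cons (C Polynomial.X : MvPolynomial (Fin m ⊕ Fin m) A[X][X]) (X ∘ Sum.inr) := by
  ext1 i; simp [peelFirst, peelFirstHom]

end MvPolynomial

theorem isRegular_pathMinors_cons_C {A : Type*} [CommRing A] [Nontrivial A] (m : ℕ) {b c : A}
    (h : NoCommonAnnihilator b c) :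
    IsRegular (MvPolynomial (Fin m ⊕ Fin m) A)
      (pathMinors (Fin.cons (C b : MvPolynomial (Fin m ⊕ Fin m) A) (X ∘ Sum.inl))
        (Fin.cons (C c) (X ∘ Sum.inr))) := by
  induction m generalizing A with
  | zero => exact IsRegular.nil _ _
  | succ m ih =>
    have := Polynomial.nontrivial_quotient_minorUV b c
    refine (RingEquiv.isRegular_map_iff (S := MvPolynomial (Fin m ⊕ Fin m) A[X][X])
      (peelFirst A m) _).mp ?_
    rw [map_pathMinors, Fin.comp_cons, Fin.comp_cons, peelFirst_comp_X_inl, peelFirst_comp_X_inr,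
      peelFirst_C, peelFirst_C, pathMinors_cons, Fin.cons_zero, Fin.cons_zero]
    have hfirst : C (Polynomial.C (Polynomial.C b)) * C (Polynomial.X : A[X][X]) -
        C (Polynomial.C Polynomial.X : A[X][X]) * C (Polynomial.C (Polynomial.C c)) =
        (C (Polynomial.minorUV b c) : MvPolynomial (Fin m ⊕ Fin m) A[X][X]) := by
      simp [Polynomial.minorUV]
    rw [hfirst, isRegular_cons_iff_of_ker_eq (map_surjective _ Ideal.Quotient.mk_surjective)
      (ker_map_mk_span_singleton _), map_pathMinors, Fin.comp_cons, Fin.comp_cons]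
    refine ⟨(Polynomial.isSMulRegular_minorUV h).of_flat, ?_⟩
    simpa [Function.comp_def] using ih (Polynomial.noCommonAnnihilator_mk_minorUV h)

/-- The generators `f_i = x_i y_{i+1} - x_{i+1} y_i`, `1 ≤ i < n + 1`, of the
binomial edge ideal of the path graph on `n + 1` vertices form a regular
sequence in `K[x_1,…,x_{n+1},y_1,…,y_{n+1}]`. -/
theorem stmt6 (K : Type) [Field K] (n : ℕ) :
    RingTheory.Sequence.IsRegular
      (R := MvPolynomial (Fin (n + 1) ⊕ Fin (n + 1)) K)
      (MvPolynomial (Fin (n + 1) ⊕ Fin (n + 1)) K)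
      (List.ofFn fun i : Fin n =>
        X (Sum.inl i.castSucc) * X (Sum.inr i.succ)
          - X (Sum.inl i.succ) * X (Sum.inr i.castSucc)) := by
  refine (RingEquiv.isRegular_map_iff (S := MvPolynomial (Fin n ⊕ Fin n) K[X][X])
    (peelFirst K n) _).mp ?_
  show IsRegular _ ((pathMinors (X ∘ Sum.inl) (X ∘ Sum.inr)).map (peelFirst K n))
  rw [map_pathMinors, peelFirst_comp_X_inl, peelFirst_comp_X_inr]
  exact isRegular_pathMinors_cons_C n Polynomial.noCommonAnnihilator_C_X_X
end

section
/- For the wheel graph W_n (n ≥ 5), consisting of a cycle on n-1 vertices each joined to a central vertex v₀, the empty set is the unique minimizer of |S| + n - c(S) over subsets S ⊆ V(W_n): for every nonempty S, |S| + n - c(S) > n - 1. -/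
/-- The wheel graph on `m + 2` vertices: a central vertex `none` joined to every
vertex of a cycle on `m + 1` vertices. -/
def wheelGraph (m : ℕ) : SimpleGraph (Option (Fin (m + 1))) :=
  SimpleGraph.fromRel (fun a b =>
    a = none ∨ ∃ i j, a = some i ∧ b = some j ∧ (SimpleGraph.cycleGraph (m + 1)).Adj i j)

namespace SimpleGraph

variable {α : Type*} {G : SimpleGraph α} {f : α → α} {T : Set α}

lemma induce_compl_reachable_apply (hf : ∀ v, f v ≠ v → G.Adj v (f v)) {v : α} (hv : v ∉ T)
    (hfv : f v ∉ T) : (G.induce Tᶜ).Reachable ⟨v, hv⟩ ⟨f v, hfv⟩ := by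
  by_cases h : f v = v
  · rw [show (⟨f v, hfv⟩ : (Tᶜ : Set α)) = ⟨v, hv⟩ from Subtype.ext h]
  · exact Adj.reachable (G := G.induce Tᶜ) (hf v h)

lemma induce_compl_reachable_iterate (hf : ∀ v, f v ≠ v → G.Adj v (f v)) {v : α}
    (h : ∀ n, f^[n] v ∉ T) (n : ℕ) :
    (G.induce Tᶜ).Reachable ⟨v, h 0⟩ ⟨f^[n] v, h n⟩ := by
  induction n with
  | zero => rfl
  | succ n ih =>
    refine ih.trans ?_
    simp only [Function.iterate_succ_apply']
    exact induce_compl_reachable_apply hf (h n) _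

lemma exists_induce_compl_reachable_apply_mem (hf : ∀ v, f v ≠ v → G.Adj v (f v)) {n : ℕ} :
    ∀ v : (Tᶜ : Set α), f^[n] v ∈ T →
      ∃ w : (Tᶜ : Set α), (G.induce Tᶜ).Reachable v w ∧ f w ∈ T := by
  induction n with
  | zero => exact fun v hv => absurd hv v.2
  | succ n ih =>
    rintro ⟨v, hv⟩ hn
    by_cases hfv : f v ∈ T
    · exact ⟨⟨v, hv⟩, .rfl, hfv⟩
    · obtain ⟨w, hw, hfw⟩ := ih ⟨f v, hfv⟩ hn
      exact ⟨w, (induce_compl_reachable_apply hf hv hfv).trans hw, hfw⟩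

theorem card_connectedComponent_induce_compl_le (hinj : f.Injective)
    (hf : ∀ v, f v ≠ v → G.Adj v (f v)) (T : Finset α) (hT : ∀ v, ∃ n, f^[n] v ∈ T) :
    Nat.card (G.induce (T : Set α)ᶜ).ConnectedComponent ≤ T.card := by
  have key (C : (G.induce (T : Set α)ᶜ).ConnectedComponent) :
      ∃ w : ((T : Set α)ᶜ : Set α),
        (G.induce (T : Set α)ᶜ).connectedComponentMk w = C ∧ f w ∈ T := by
    induction C using ConnectedComponent.ind with
    | h v =>
      obtain ⟨w, hvw, hw⟩ := exists_induce_compl_reachable_apply_mem hf v (hT v).choose_spec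
      exact ⟨w, (ConnectedComponent.sound hvw).symm, hw⟩
  choose w hwC hwT using key
  calc Nat.card (G.induce (T : Set α)ᶜ).ConnectedComponent ≤ Nat.card T :=
        Nat.card_le_card_of_injective (fun C => ⟨f (w C), hwT C⟩) fun C D h => by
          rw [← hwC C, ← hwC D, Subtype.ext (hinj (congrArg Subtype.val h))]
    _ = T.card := Nat.card_eq_finsetCard T

end SimpleGraph

open SimpleGraph
open scoped Fin.NatCast

lemma wheelGraph_adj_none_some (m : ℕ) (i : Fin (m + 1)) : (wheelGraph m).Adj none (some i) := by
  simp [wheelGraph]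

lemma wheelGraph_adj_map_add_one (m : ℕ) (v : Option (Fin (m + 1)))
    (hv : v.map (· + 1) ≠ v) : (wheelGraph m).Adj v (v.map (· + 1)) := by
  obtain _ | i := v
  · exact absurd rfl hv
  refine (fromRel_adj _ _ _).2 ⟨hv.symm, .inl (.inr ⟨i, i + 1, rfl, rfl, ?_⟩)⟩
  obtain _ | k := m
  · exact absurd (congrArg some (Subsingleton.elim (α := Fin 1) _ _)) hv
  · exact cycleGraph_adj.2 (.inr (add_sub_cancel_left i 1))

lemma iterate_optionMap_add_one_some {m : ℕ} (i : Fin (m + 1)) (n : ℕ) :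
    (Option.map (· + 1 : Fin (m + 1) → Fin (m + 1)))^[n] (some i) =
      some (i + (n : Fin (m + 1))) := by
  induction n with
  | zero => simp
  | succ n ih => rw [Function.iterate_succ_apply', ih, Option.map_some, Nat.cast_succ, add_assoc]

lemma wheelGraph_induce_compl_preconnected_of_none_notMem {m : ℕ}
    {S : Set (Option (Fin (m + 1)))} (hS : none ∉ S) :
    ((wheelGraph m).induce Sᶜ).Preconnected := by
  have hub : ∀ v, ((wheelGraph m).induce Sᶜ).Reachable v ⟨none, hS⟩ := by
    rintro ⟨_ | i, hi⟩
    · rfl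
    · exact Adj.reachable (G := (wheelGraph m).induce Sᶜ) (wheelGraph_adj_none_some m i).symm
  exact fun v w => (hub v).trans (hub w).symm

lemma wheelGraph_induce_compl_preconnected_of_forall_some_notMem {m : ℕ}
    {S : Set (Option (Fin (m + 1)))} (hS : ∀ i, some i ∉ S) :
    ((wheelGraph m).induce Sᶜ).Preconnected := by
  have h0 (n : ℕ) : (Option.map (· + 1 : Fin (m + 1) → Fin (m + 1)))^[n] (some 0) ∉ S := by
    rw [iterate_optionMap_add_one_some]
    exact hS _
  have from_zero : ∀ v, ((wheelGraph m).induce Sᶜ).Reachable ⟨some 0, hS 0⟩ v := by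
    rintro ⟨_ | i, hi⟩
    · exact Adj.reachable (G := (wheelGraph m).induce Sᶜ) (wheelGraph_adj_none_some m 0).symm
    · convert induce_compl_reachable_iterate (wheelGraph_adj_map_add_one m) h0 i.val using 2
      rw [iterate_optionMap_add_one_some, Fin.cast_val_eq_self, zero_add]
  exact fun v w => (from_zero v).symm.trans (from_zero w)

theorem numComp_wheelGraph_le_card {m : ℕ} {S : Finset (Option (Fin (m + 1)))} (hS : S.Nonempty) :
    numComp (wheelGraph m) S ≤ S.card := by
  unfold numComp
  have le_card_of_preconnected (h : ((wheelGraph m).induce (S : Set _)ᶜ).Preconnected) :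
      Nat.card ((wheelGraph m).induce (S : Set _)ᶜ).ConnectedComponent ≤ S.card := by
    have := h.subsingleton_connectedComponent
    exact Finite.card_le_one_iff_subsingleton.2 this |>.trans hS.card_pos
  by_cases hnone : none ∈ S
  · by_cases hsome : ∃ i, some i ∈ S
    · obtain ⟨i₀, hi₀⟩ := hsome
      refine card_connectedComponent_induce_compl_le (Option.map_injective (add_left_injective 1))
        (wheelGraph_adj_map_add_one m) S ?_
      rintro (_ | a)
      · exact ⟨0, hnone⟩
      · refine ⟨(i₀ - a).val, ?_⟩
        rwa [iterate_optionMap_add_one_some, Fin.cast_val_eq_self, add_sub_cancel]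
    · push Not at hsome
      exact le_card_of_preconnected
        (wheelGraph_induce_compl_preconnected_of_forall_some_notMem (by simpa using hsome))
  · exact le_card_of_preconnected
      (wheelGraph_induce_compl_preconnected_of_none_notMem (by simpa using hnone))

theorem stmt10_general (m : ℕ)
    (S : Finset (Option (Fin (m + 1)))) (hS : S.Nonempty) :
    ((m : ℤ) + 2) - 1 < (S.card : ℤ) + (m + 2) - numComp (wheelGraph m) S := by
  have := numComp_wheelGraph_le_card hS
  omega

/-- For the wheel graph `W_n` (`n = m + 2 ≥ 5`), the empty set is the unique
minimizer of `|S| + n - c(S)`: every nonempty `S` has height `> n - 1`. -/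
theorem stmt10 (m : ℕ) (hm : 3 ≤ m)
    (S : Finset (Option (Fin (m + 1)))) (hS : S.Nonempty) :
    ((m : ℤ) + 2) - 1 < (S.card : ℤ) + (m + 2) - numComp (wheelGraph m) S :=
  stmt10_general m S hS
end

section
/- For the barbell graph B_n (n ≥ 3), obtained by joining a vertex v₁ of one copy of K_n to a vertex v₂ of a disjoint copy of K_n by a single edge, the minimizing subsets of the function S ↦ |S| + 2n - c(S) are exactly ∅, {v₁}, and {v₂}, all attaining the value 2n - 1. -/
/-- The barbell graph `B_n`: two disjoint copies of `K_n` (on `Sum.inl` and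
`Sum.inr` vertices) joined by the single edge `{v₁, v₂} = {inl 0, inr 0}`. -/
def barbellGraph (n : ℕ) [NeZero n] : SimpleGraph (Fin n ⊕ Fin n) :=
  SimpleGraph.fromRel (fun a b =>
    (∃ i j, a = Sum.inl i ∧ b = Sum.inl j) ∨
    (∃ i j, a = Sum.inr i ∧ b = Sum.inr j) ∨
    (a = Sum.inl 0 ∧ b = Sum.inr 0))

/-! Each side of the barbell is a clique, so all surviving vertices of one side of `B_n - S` lie in
one component: `c(S) ≤ 2`, and `c(S) = 1` while the bridge `v₁v₂` survives. Hence
`|S| - c(S) ≥ -1`, and equality forces `|S| ≤ 1`, a single deleted vertex having to cut the bridge. -/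

namespace SimpleGraph

variable {W β : Type*} {H : SimpleGraph W}

theorem Reachable.apply_eq_of_forall_adj {f : W → β} (hf : ∀ x y, H.Adj x y → f x = f y)
    {u v : W} (h : H.Reachable u v) : f u = f v := by
  rw [reachable_iff_reflTransGen] at h
  simpa [Relation.reflTransGen_eq_self] using h.lift f hf

theorem card_connectedComponent_eq_card_range (f : W → β)
    (hadj : ∀ x y, H.Adj x y → f x = f y) (hfib : ∀ x y, f x = f y → H.Reachable x y) :
    Nat.card H.ConnectedComponent = Nat.card (Set.range f) := by
  refine Nat.card_congr (Equiv.ofBijective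
    (ConnectedComponent.lift (fun v => ⟨f v, v, rfl⟩) fun v w p _ =>
      Subtype.ext (p.reachable.apply_eq_of_forall_adj hadj)) ⟨?_, ?_⟩)
  · refine ConnectedComponent.ind₂ fun v w h => ConnectedComponent.sound ?_
    exact hfib v w (congrArg Subtype.val h)
  · rintro ⟨_, v, rfl⟩
    exact ⟨H.connectedComponentMk v, rfl⟩

end SimpleGraph

namespace barbellGraph

open SimpleGraph Sum

variable {n : ℕ} [NeZero n]

theorem adj_iff {a b : Fin n ⊕ Fin n} :
    (barbellGraph n).Adj a b ↔ a ≠ b ∧ (a.isLeft = b.isLeft ∨ s(a, b) = s(inl 0, inr 0)) := by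
  rcases a with i | i <;> rcases b with j | j <;> simp [barbellGraph, eq_comm, and_comm]

theorem reachable_induce_of_isLeft_eq {s : Set (Fin n ⊕ Fin n)} {x y : s}
    (h : x.1.isLeft = y.1.isLeft) : ((barbellGraph n).induce s).Reachable x y := by
  obtain rfl | hne := eq_or_ne x y
  · rfl
  · exact Adj.reachable (adj_iff.mpr ⟨fun h' => hne (Subtype.ext h'), Or.inl h⟩)

theorem preconnected_induce {s : Set (Fin n ⊕ Fin n)} (h₁ : inl 0 ∈ s) (h₂ : inr 0 ∈ s) :
    ((barbellGraph n).induce s).Preconnected := by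
  have hbridge : ((barbellGraph n).induce s).Reachable ⟨inl 0, h₁⟩ ⟨inr 0, h₂⟩ :=
    Adj.reachable (adj_iff.mpr ⟨by simp, Or.inr rfl⟩)
  have hside : ∀ x : s, ((barbellGraph n).induce s).Reachable x ⟨inl 0, h₁⟩ := by
    rintro ⟨a | a, ha⟩
    · exact reachable_induce_of_isLeft_eq rfl
    · exact (reachable_induce_of_isLeft_eq (x := ⟨inr a, ha⟩) (y := ⟨inr 0, h₂⟩) rfl).trans
        hbridge.symm
  exact fun x y => (hside x).trans (hside y).symm

theorem isLeft_eq_of_induce_adj {s : Set (Fin n ⊕ Fin n)} (hcut : inl 0 ∉ s ∨ inr 0 ∉ s)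
    {x y : s} (h : ((barbellGraph n).induce s).Adj x y) : x.1.isLeft = y.1.isLeft := by
  refine (adj_iff.mp h).2.resolve_right fun hxy => ?_
  change s(x.1, y.1) = _ at hxy
  have hmem : ∀ v ∈ s(x.1, y.1), v ∈ s := by simp [x.2, y.2]
  rw [hxy] at hmem
  exact hcut.elim (· (hmem _ (by simp))) (· (hmem _ (by simp)))

theorem numComp_eq_one {S : Finset (Fin n ⊕ Fin n)} (h₁ : inl 0 ∉ S) (h₂ : inr 0 ∉ S) :
    numComp (barbellGraph n) S = 1 := by
  have := (preconnected_induce (s := (S : Set (Fin n ⊕ Fin n))ᶜ) (by simpa) (by simpa))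
    |>.subsingleton_connectedComponent
  have : Nonempty ((barbellGraph n).induce (↑S)ᶜ).ConnectedComponent :=
    ⟨connectedComponentMk _ ⟨inl 0, h₁⟩⟩
  exact Nat.card_unique

theorem numComp_eq_card_range_isLeft {S : Finset (Fin n ⊕ Fin n)}
    (hcut : inl 0 ∈ S ∨ inr 0 ∈ S) :
    numComp (barbellGraph n) S =
      Nat.card (Set.range fun x : ((S : Set (Fin n ⊕ Fin n))ᶜ : Set _) => x.1.isLeft) := by
  refine card_connectedComponent_eq_card_range _ (fun x y => isLeft_eq_of_induce_adj ?_)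
    fun x y => reachable_induce_of_isLeft_eq
  simpa using hcut

theorem numComp_le_two (S : Finset (Fin n ⊕ Fin n)) : numComp (barbellGraph n) S ≤ 2 := by
  by_cases hcut : inl 0 ∈ S ∨ inr 0 ∈ S
  · rw [numComp_eq_card_range_isLeft hcut, Nat.card_coe_set_eq]
    exact (Set.ncard_le_card _).trans_eq (by simp)
  · push Not at hcut
    rw [numComp_eq_one hcut.1 hcut.2]
    norm_num

theorem numComp_eq_two {S : Finset (Fin n ⊕ Fin n)} (hcut : inl 0 ∈ S ∨ inr 0 ∈ S)
    {i j : Fin n} (hi : inl i ∉ S) (hj : inr j ∉ S) : numComp (barbellGraph n) S = 2 := by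
  have hsurj : Function.Surjective fun x : ((S : Set (Fin n ⊕ Fin n))ᶜ : Set _) => x.1.isLeft
    | true => ⟨⟨inl i, hi⟩, rfl⟩
    | false => ⟨⟨inr j, hj⟩, rfl⟩
  rw [numComp_eq_card_range_isLeft hcut, hsurj.range_eq, Nat.card_univ, Nat.card_eq_fintype_card,
    Fintype.card_bool]

theorem numComp_le_card_add_one (S : Finset (Fin n ⊕ Fin n)) :
    numComp (barbellGraph n) S ≤ S.card + 1 := by
  obtain rfl | hS := S.eq_empty_or_nonempty
  · simp [numComp_eq_one]
  · have := numComp_le_two S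
    have := hS.card_pos
    omega

theorem numComp_eq_card_add_one_iff (hn : 2 ≤ n) (S : Finset (Fin n ⊕ Fin n)) :
    numComp (barbellGraph n) S = S.card + 1 ↔ S = ∅ ∨ S = {inl 0} ∨ S = {inr 0} := by
  constructor
  · intro h
    have hcard : S.card ≤ 1 := by have := numComp_le_two S; omega
    obtain hS | hS := Nat.le_one_iff_eq_zero_or_eq_one.mp hcard
    · exact Or.inl (Finset.card_eq_zero.mp hS)
    obtain ⟨v, rfl⟩ := Finset.card_eq_one.mp hS
    by_contra! hv
    rw [numComp_eq_one (by simpa [eq_comm] using hv.2.1) (by simpa [eq_comm] using hv.2.2)] at h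
    simp at h
  · rintro (rfl | rfl | rfl)
    · simp [numComp_eq_one]
    · rw [numComp_eq_two (by simp) (i := ⟨1, by omega⟩) (j := 0) (by simp [Fin.ext_iff]) (by simp)]
      simp
    · rw [numComp_eq_two (by simp) (i := 0) (j := ⟨1, by omega⟩) (by simp) (by simp [Fin.ext_iff])]
      simp

end barbellGraph

/-- For the barbell graph `B_n` (`n ≥ 3`), the minimizers of
`S ↦ |S| + 2n - c(S)` are exactly `∅`, `{v₁}`, `{v₂}`, all attaining the
minimum value `2n - 1`. -/
theorem stmt15 (n : ℕ) [NeZero n] (hn : 3 ≤ n) :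
    (∀ S : Finset (Fin n ⊕ Fin n),
      2 * (n : ℤ) - 1 ≤ (S.card : ℤ) + 2 * n - numComp (barbellGraph n) S) ∧
    (∀ S : Finset (Fin n ⊕ Fin n),
      (S.card : ℤ) + 2 * n - numComp (barbellGraph n) S = 2 * (n : ℤ) - 1 ↔
        S = ∅ ∨ S = {Sum.inl 0} ∨ S = {Sum.inr 0}) := by
  refine ⟨fun S => ?_, fun S => ?_⟩
  · have := barbellGraph.numComp_le_card_add_one S
    omega
  · rw [← barbellGraph.numComp_eq_card_add_one_iff (by omega) S]
    omega
end

section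
/- For the horned complete graph Ǩ_n (the complete graph K_n on vertices U = {v₁,...,v_n} with two pendant leaves attached to each v_i, giving 3n vertices total), the minimizing subsets of S ↦ |S| + 3n - c(S) are exactly the n sets U \ {v_i} (i ∈ [n]) together with U itself, all attaining the value (n-1) + 3n - (2n-1) = 2n. -/
/-- The horned complete graph `Ǩ_n`: the complete graph on the vertices
`Sum.inl i` (`i : Fin n`) together with two pendant leaves `Sum.inr (i, 0)` and
`Sum.inr (i, 1)` attached to each `Sum.inl i`; `3n` vertices in total. -/
def hornedCompleteGraph (n : ℕ) : SimpleGraph (Fin n ⊕ Fin n × Fin 2) :=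
  SimpleGraph.fromRel (fun a b =>
    (∃ i j, a = Sum.inl i ∧ b = Sum.inl j) ∨
    (∃ i k, a = Sum.inl i ∧ b = Sum.inr (i, k)))



namespace HornedAux

variable {n : ℕ}

lemma adj_inl_inl {i j : Fin n} :
    (hornedCompleteGraph n).Adj (Sum.inl i) (Sum.inl j) ↔ i ≠ j := by
  simp [hornedCompleteGraph, SimpleGraph.fromRel_adj]

lemma adj_inl_inr {i : Fin n} {p : Fin n × Fin 2} :
    (hornedCompleteGraph n).Adj (Sum.inl i) (Sum.inr p) ↔ p.1 = i := by
  constructor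
  · rintro ⟨hne, h | h⟩ <;> rcases h with ⟨_,_,h,h'⟩|⟨_,_,h,h'⟩ <;> simp_all
  · intro h
    exact ⟨by simp, Or.inl (Or.inr ⟨i, p.2, rfl, by rw [← h]⟩)⟩

lemma adj_inr_inl {i : Fin n} {p : Fin n × Fin 2} :
    (hornedCompleteGraph n).Adj (Sum.inr p) (Sum.inl i) ↔ p.1 = i := by
  rw [SimpleGraph.adj_comm]; exact adj_inl_inr

lemma not_adj_inr_inr {p q : Fin n × Fin 2} :
    ¬ (hornedCompleteGraph n).Adj (Sum.inr p) (Sum.inr q) := by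
  rintro ⟨hne, h | h⟩ <;>
  · rcases h with ⟨_,_,h,h'⟩|⟨_,_,h,h'⟩ <;> simp_all

section Count

variable (S : Finset (Fin n ⊕ Fin n × Fin 2))

abbrev T : Set (Fin n ⊕ Fin n × Fin 2) := ((S : Set _))ᶜ

abbrev H : SimpleGraph (T S) := (hornedCompleteGraph n).induce (T S)

/-- canonical label of the component of a vertex -/
def g : T S → Option (Fin n × Fin 2) := fun x =>
  match x with
  | ⟨Sum.inl _, _⟩ => none
  | ⟨Sum.inr p, _⟩ => if Sum.inl p.1 ∈ S then some p else none

lemma H_adj {x y : T S} : (H S).Adj x y ↔ (hornedCompleteGraph n).Adj x.1 y.1 :=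
  Iff.rfl

lemma g_inl {i : Fin n} {h} : g S ⟨Sum.inl i, h⟩ = none := rfl

lemma g_inr {p : Fin n × Fin 2} {h} :
    g S ⟨Sum.inr p, h⟩ = if Sum.inl p.1 ∈ S then some p else none := rfl

lemma g_adj {x y : T S} (h : (H S).Adj x y) : g S x = g S y := by
  obtain ⟨x, hx⟩ := x
  obtain ⟨y, hy⟩ := y
  rw [H_adj] at h
  match x, y with
  | Sum.inl i, Sum.inl j => rfl
  | Sum.inl i, Sum.inr p =>
      have hpi : p.1 = i := adj_inl_inr.mp h
      rw [g_inl, g_inr, if_neg (by rw [hpi]; simpa using hx)]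
  | Sum.inr p, Sum.inl i =>
      have hpi : p.1 = i := adj_inr_inl.mp h
      rw [g_inl, g_inr, if_neg (by rw [hpi]; simpa using hy)]
  | Sum.inr p, Sum.inr q => exact absurd h not_adj_inr_inr

lemma g_walk {x y : T S} (p : (H S).Walk x y) : g S x = g S y := by
  induction p with
  | nil => rfl
  | cons h _ ih => exact (g_adj S h).trans ih

/-- vertices labelled `none` reach a core vertex -/
lemma reach_core {x : T S} (hx : g S x = none) :
    ∃ (i : Fin n) (hi : Sum.inl i ∈ T S), (H S).Reachable x ⟨Sum.inl i, hi⟩ := by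
  obtain ⟨x, hxT⟩ := x
  match x with
  | Sum.inl i => exact ⟨i, hxT, SimpleGraph.Reachable.refl _⟩
  | Sum.inr p =>
      rw [g_inr] at hx
      have hni : Sum.inl p.1 ∉ S := by
        by_contra hc; rw [if_pos hc] at hx; exact Option.some_ne_none _ hx
      exact ⟨p.1, hni, SimpleGraph.Adj.reachable (by rw [H_adj]; exact adj_inr_inl.mpr rfl)⟩

lemma g_inj {x y : T S} (h : g S x = g S y) : (H S).Reachable x y := by
  match hx : g S x with
  | some p =>
      rw [hx] at h
      obtain ⟨x, hxT⟩ := x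
      obtain ⟨y, hyT⟩ := y
      match x, y with
      | Sum.inl i, _ => exact absurd hx (by rw [g_inl]; simp)
      | Sum.inr q, Sum.inl j => rw [g_inl] at h; exact absurd h (by simp)
      | Sum.inr q, Sum.inr r =>
          rw [g_inr] at hx h
          have hq : q = p := by
            by_cases hc : Sum.inl q.1 ∈ S
            · rw [if_pos hc] at hx; exact Option.some_injective _ hx
            · rw [if_neg hc] at hx; exact absurd hx (by simp)
          have hr : r = p := by
            by_cases hc : Sum.inl r.1 ∈ S
            · rw [if_pos hc] at h; exact (Option.some_injective _ h).symm
            · rw [if_neg hc] at h; exact absurd h (by simp)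
          subst hq; subst hr; rfl
  | none =>
      rw [hx] at h
      obtain ⟨i, hi, hri⟩ := reach_core S hx
      obtain ⟨j, hj, hrj⟩ := reach_core S h.symm
      refine hri.trans (SimpleGraph.Reachable.trans ?_ hrj.symm)
      rcases eq_or_ne i j with rfl | hij
      · rfl
      · exact SimpleGraph.Adj.reachable (by rw [H_adj]; exact adj_inl_inl.mpr hij)




def P : Option (Fin n × Fin 2) → Prop
  | none => ∃ i : Fin n, Sum.inl i ∉ S
  | some p => Sum.inr p ∉ S ∧ Sum.inl p.1 ∈ S

instance : DecidablePred (P S) := fun o => by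
  cases o <;> simp only [P] <;> infer_instance

lemma P_of_g (x : T S) : P S (g S x) := by
  obtain ⟨x, hx⟩ := x
  match x with
  | Sum.inl i => rw [g_inl]; exact ⟨i, by simpa using hx⟩
  | Sum.inr p =>
      rw [g_inr]
      by_cases hc : Sum.inl p.1 ∈ S
      · rw [if_pos hc]; exact ⟨by simpa using hx, hc⟩
      · rw [if_neg hc]; exact ⟨p.1, hc⟩

noncomputable def phi : (H S).ConnectedComponent → {o : Option (Fin n × Fin 2) // P S o} :=
  SimpleGraph.ConnectedComponent.lift (fun x => ⟨g S x, P_of_g S x⟩)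
    (fun v w p _ => Subtype.ext (g_walk S p))

lemma phi_bij : Function.Bijective (phi S) := by
  constructor
  · refine SimpleGraph.ConnectedComponent.ind₂ (fun x y h => ?_)
    exact SimpleGraph.ConnectedComponent.sound (g_inj S (Subtype.ext_iff.mp h))
  · rintro ⟨o, ho⟩
    match o with
    | some p =>
        have hmem : (Sum.inr p : Fin n ⊕ Fin n × Fin 2) ∈ T S := by simpa using ho.1
        refine ⟨(H S).connectedComponentMk ⟨Sum.inr p, hmem⟩, Subtype.ext ?_⟩
        show g S ⟨Sum.inr p, hmem⟩ = some p
        rw [g_inr, if_pos ho.2]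
    | none =>
        obtain ⟨i, hi⟩ := ho
        have hmem : (Sum.inl i : Fin n ⊕ Fin n × Fin 2) ∈ T S := by simpa using hi
        refine ⟨(H S).connectedComponentMk ⟨Sum.inl i, hmem⟩, Subtype.ext ?_⟩
        show g S ⟨Sum.inl i, hmem⟩ = none
        exact g_inl S

lemma numComp_eq :
    numComp (hornedCompleteGraph n) S =
      (Finset.univ.filter
        (fun p : Fin n × Fin 2 => Sum.inr p ∉ S ∧ Sum.inl p.1 ∈ S)).card
      + (if ∃ i : Fin n, Sum.inl i ∉ S then 1 else 0) := by
  classical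
  have h1 : numComp (hornedCompleteGraph n) S = Nat.card {o : Option (Fin n × Fin 2) // P S o} :=
    Nat.card_eq_of_bijective _ (phi_bij S)
  rw [h1, Nat.card_eq_fintype_card, Fintype.card_subtype]
  have hset : Finset.univ.filter (P S) =
      ((Finset.univ.filter
        (fun p : Fin n × Fin 2 => Sum.inr p ∉ S ∧ Sum.inl p.1 ∈ S)).image some)
      ∪ (if ∃ i : Fin n, Sum.inl i ∉ S then {none} else ∅) := by
    ext o
    match o with
    | none => by_cases h : ∃ i : Fin n, Sum.inl i ∉ S <;> simp [P, h]
    | some p => by_cases h : ∃ i : Fin n, Sum.inl i ∉ S <;> simp [P, h]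
  rw [hset, Finset.card_union_of_disjoint, Finset.card_image_of_injective _ (Option.some_injective _)]
  · congr 1
    split_ifs <;> simp
  · split_ifs <;> simp



lemma card_split :
    S.card = (Finset.univ.filter fun i : Fin n => Sum.inl i ∈ S).card
      + (Finset.univ.filter fun p : Fin n × Fin 2 => Sum.inr p ∈ S).card := by
  classical
  have h1 : S.filter (fun x => x.isLeft) =
      (Finset.univ.filter fun i : Fin n => Sum.inl i ∈ S).image Sum.inl := by
    ext x; cases x <;> simp
  have h2 : S.filter (fun x => ¬ x.isLeft) =
      (Finset.univ.filter fun p : Fin n × Fin 2 => Sum.inr p ∈ S).image Sum.inr := by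
    ext x; cases x <;> simp
  rw [← Finset.card_filter_add_card_filter_not (s := S) (p := fun x => x.isLeft),
    h1, h2, Finset.card_image_of_injective _ Sum.inl_injective,
    Finset.card_image_of_injective _ Sum.inr_injective]

lemma two_a_eq :
    (Finset.univ.filter fun p : Fin n × Fin 2 => Sum.inl p.1 ∈ S).card
      = 2 * (Finset.univ.filter fun i : Fin n => Sum.inl i ∈ S).card := by
  classical
  have h : (Finset.univ.filter fun p : Fin n × Fin 2 => Sum.inl p.1 ∈ S)
      = (Finset.univ.filter fun i : Fin n => Sum.inl i ∈ S) ×ˢ (Finset.univ : Finset (Fin 2)) := by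
    ext p; simp [Finset.mem_product]
  rw [h, Finset.card_product]
  simp [mul_comm]

lemma ell_facts :
    (Finset.univ.filter
      (fun p : Fin n × Fin 2 => Sum.inr p ∉ S ∧ Sum.inl p.1 ∈ S)).card
      ≤ 2 * (Finset.univ.filter fun i : Fin n => Sum.inl i ∈ S).card
    ∧ 2 * (Finset.univ.filter fun i : Fin n => Sum.inl i ∈ S).card
      ≤ (Finset.univ.filter
          (fun p : Fin n × Fin 2 => Sum.inr p ∉ S ∧ Sum.inl p.1 ∈ S)).card
        + (Finset.univ.filter fun p : Fin n × Fin 2 => Sum.inr p ∈ S).card := by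
  classical
  set W := Finset.univ.filter fun p : Fin n × Fin 2 => Sum.inl p.1 ∈ S with hW
  have hsplit : (W.filter fun p => Sum.inr p ∉ S).card
      + (W.filter fun p => Sum.inr p ∈ S).card = W.card := by
    rw [add_comm]
    exact Finset.card_filter_add_card_filter_not (p := fun p => Sum.inr p ∈ S)
  have hL : W.filter (fun p => Sum.inr p ∉ S)
      = Finset.univ.filter (fun p : Fin n × Fin 2 => Sum.inr p ∉ S ∧ Sum.inl p.1 ∈ S) := by
    rw [hW, Finset.filter_filter]
    apply Finset.filter_congr
    intro p _
    tauto
  have hB : W.filter (fun p => Sum.inr p ∈ S)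
      ⊆ Finset.univ.filter fun p : Fin n × Fin 2 => Sum.inr p ∈ S := by
    intro p hp
    simp only [Finset.mem_filter] at hp ⊢
    exact ⟨Finset.mem_univ _, hp.2⟩
  have hBc := Finset.card_le_card hB
  rw [hL] at hsplit
  rw [two_a_eq S] at *
  constructor
  · omega
  · omega

end Count

lemma value_S0 (hn : 1 ≤ n) :
    (((Finset.univ.image (Sum.inl : Fin n → Fin n ⊕ Fin n × Fin 2)).card : ℤ) + 3 * n
      - numComp (hornedCompleteGraph n) (Finset.univ.image Sum.inl)) = 2 * n := by
  classical
  rw [numComp_eq]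
  have h1 : (Finset.univ.image (Sum.inl : Fin n → Fin n ⊕ Fin n × Fin 2)).card = n := by
    rw [Finset.card_image_of_injective _ Sum.inl_injective, Finset.card_univ, Fintype.card_fin]
  have h2 : (Finset.univ.filter
      (fun p : Fin n × Fin 2 =>
        Sum.inr p ∉ Finset.univ.image (Sum.inl : Fin n → Fin n ⊕ Fin n × Fin 2)
        ∧ Sum.inl p.1 ∈ Finset.univ.image (Sum.inl : Fin n → Fin n ⊕ Fin n × Fin 2)))
      = Finset.univ := by
    ext p; simp
  have h3 : ¬ ∃ i : Fin n,
      Sum.inl i ∉ Finset.univ.image (Sum.inl : Fin n → Fin n ⊕ Fin n × Fin 2) := by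
    push_neg; intro i; simp
  rw [if_neg h3, h2, h1, Finset.card_univ]
  simp only [Fintype.card_prod, Fintype.card_fin]
  push_cast
  ring

lemma value_S1 (hn : 1 ≤ n) (i₀ : Fin n) :
    ((((Finset.univ.image (Sum.inl : Fin n → Fin n ⊕ Fin n × Fin 2)).erase (Sum.inl i₀)).card : ℤ)
      + 3 * n
      - numComp (hornedCompleteGraph n)
          ((Finset.univ.image Sum.inl).erase (Sum.inl i₀))) = 2 * n := by
  classical
  rw [numComp_eq]
  set S₁ := (Finset.univ.image (Sum.inl : Fin n → Fin n ⊕ Fin n × Fin 2)).erase (Sum.inl i₀)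
    with hS₁
  have h1 : S₁.card = n - 1 := by
    rw [hS₁, Finset.card_erase_of_mem (by simp),
      Finset.card_image_of_injective _ Sum.inl_injective, Finset.card_univ, Fintype.card_fin]
  have h2 : (Finset.univ.filter
      (fun p : Fin n × Fin 2 => Sum.inr p ∉ S₁ ∧ Sum.inl p.1 ∈ S₁))
      = (Finset.univ.erase i₀) ×ˢ (Finset.univ : Finset (Fin 2)) := by
    ext p
    simp [hS₁, Finset.mem_product, eq_comm]
  have h3 : ∃ i : Fin n, Sum.inl i ∉ S₁ := ⟨i₀, by simp [hS₁]⟩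
  rw [if_pos h3, h2, h1, Finset.card_product, Finset.card_erase_of_mem (Finset.mem_univ _),
    Finset.card_univ, Finset.card_univ, Fintype.card_fin, Fintype.card_fin]
  have : (1:ℕ) ≤ n := hn
  push_cast [Nat.cast_sub this]
  ring

lemma master (hn : 1 ≤ n) (S : Finset (Fin n ⊕ Fin n × Fin 2)) :
    2 * (n : ℤ) ≤ (S.card : ℤ) + 3 * n - numComp (hornedCompleteGraph n) S ∧
    ((S.card : ℤ) + 3 * n - numComp (hornedCompleteGraph n) S = 2 * n ↔
      S = Finset.univ.image Sum.inl ∨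
      ∃ i : Fin n, S = (Finset.univ.image Sum.inl).erase (Sum.inl i)) := by
  classical
  have hback : (S = Finset.univ.image Sum.inl ∨
      ∃ i : Fin n, S = (Finset.univ.image Sum.inl).erase (Sum.inl i)) →
      (S.card : ℤ) + 3 * n - numComp (hornedCompleteGraph n) S = 2 * n := by
    rintro (rfl | ⟨i, rfl⟩)
    · exact value_S0 hn
    · exact value_S1 hn i
  set a := (Finset.univ.filter fun i : Fin n => Sum.inl i ∈ S).card with ha_def
  set b := (Finset.univ.filter fun p : Fin n × Fin 2 => Sum.inr p ∈ S).card with hb_def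
  set l := (Finset.univ.filter
      (fun p : Fin n × Fin 2 => Sum.inr p ∉ S ∧ Sum.inl p.1 ∈ S)).card with hl_def
  have hS : S.card = a + b := card_split S
  have hl1 : l ≤ 2 * a := (ell_facts S).1
  have hl2 : 2 * a ≤ l + b := (ell_facts S).2
  have ha : a ≤ n := by
    rw [ha_def]
    exact le_trans (Finset.card_filter_le _ _) (by simp)
  have hc := numComp_eq S
  by_cases h : ∃ i : Fin n, Sum.inl i ∉ S
  · rw [if_pos h] at hc
    obtain ⟨i₀, hi₀⟩ := h
    have han : a < n := by
      rcases lt_or_eq_of_le ha with h' | h'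
      · exact h'
      · exfalso
        have huniv : (Finset.univ.filter fun i : Fin n => Sum.inl i ∈ S) = Finset.univ := by
          apply Finset.eq_of_subset_of_card_le (Finset.subset_univ _)
          rw [Finset.card_univ, Fintype.card_fin, ← ha_def, h']
        have : i₀ ∈ Finset.univ.filter fun i : Fin n => Sum.inl i ∈ S := by
          rw [huniv]; exact Finset.mem_univ _
        exact hi₀ (Finset.mem_filter.mp this).2
    refine ⟨?_, ?_, hback⟩
    · rw [hS, hc, ← hl_def]; push_cast; omega
    · intro heq
      rw [hS, hc, ← hl_def] at heq
      push_cast at heq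
      have hkey : a = n - 1 ∧ b = 0 := by omega
      right
      refine ⟨i₀, ?_⟩
      have hBe : ∀ p : Fin n × Fin 2, Sum.inr p ∉ S := by
        intro p hp
        have h0 : (Finset.univ.filter
            (fun p : Fin n × Fin 2 => Sum.inr p ∈ S)).card = 0 := by
          rw [← hb_def]; exact hkey.2
        have hemp := Finset.card_eq_zero.mp h0
        have hmem : p ∈ Finset.univ.filter
            (fun p : Fin n × Fin 2 => Sum.inr p ∈ S) := by simp [hp]
        rw [hemp] at hmem
        exact absurd hmem (Finset.notMem_empty _)
      have hA : (Finset.univ.filter fun i : Fin n => Sum.inl i ∈ S)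
          = Finset.univ.erase i₀ := by
        apply Finset.eq_of_subset_of_card_le
        · intro j hj
          rw [Finset.mem_erase]
          refine ⟨?_, Finset.mem_univ _⟩
          rintro rfl
          exact hi₀ (Finset.mem_filter.mp hj).2
        · rw [Finset.card_erase_of_mem (Finset.mem_univ _), Finset.card_univ, Fintype.card_fin,
            ← ha_def, hkey.1]
      ext x
      match x with
      | Sum.inl j =>
          have : (Sum.inl j ∈ S) ↔ j ∈ Finset.univ.erase i₀ := by
            rw [← hA]; simp
          simp only [Finset.mem_erase, Finset.mem_univ, and_true] at this
          simp [this, Sum.inl.injEq]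
      | Sum.inr p =>
          simp [hBe p]
  · rw [if_neg h] at hc
    push_neg at h
    have hA : (Finset.univ.filter fun i : Fin n => Sum.inl i ∈ S) = Finset.univ := by
      ext j; simp [h j]
    have han : a = n := by rw [ha_def, hA, Finset.card_univ, Fintype.card_fin]
    have hlb : l + b = 2 * n := by
      have hfe : (Finset.univ.filter
          (fun p : Fin n × Fin 2 => Sum.inr p ∉ S ∧ Sum.inl p.1 ∈ S))
          = Finset.univ.filter (fun p : Fin n × Fin 2 => Sum.inr p ∉ S) := by
        apply Finset.filter_congr
        intro p _
        simp [h p.1]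
      have htot := Finset.card_filter_add_card_filter_not
        (s := (Finset.univ : Finset (Fin n × Fin 2))) (p := fun p => Sum.inr p ∈ S)
      rw [Finset.card_univ, Fintype.card_prod, Fintype.card_fin, Fintype.card_fin] at htot
      rw [hl_def, hfe, hb_def]
      omega
    refine ⟨?_, ?_, hback⟩
    · rw [hS, hc, ← hl_def]; push_cast; omega
    · intro heq
      rw [hS, hc, ← hl_def] at heq
      push_cast at heq
      have hb : b = 0 := by omega
      left
      have hBe : ∀ p : Fin n × Fin 2, Sum.inr p ∉ S := by
        intro p hp
        have h0 : (Finset.univ.filter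
            (fun p : Fin n × Fin 2 => Sum.inr p ∈ S)).card = 0 := by
          rw [← hb_def]; exact hb
        have hemp := Finset.card_eq_zero.mp h0
        have hmem : p ∈ Finset.univ.filter
            (fun p : Fin n × Fin 2 => Sum.inr p ∈ S) := by simp [hp]
        rw [hemp] at hmem
        exact absurd hmem (Finset.notMem_empty _)
      ext x
      match x with
      | Sum.inl j => simp [h j]
      | Sum.inr p => simp [hBe p]

end HornedAux

/-- For the horned complete graph `Ǩ_n`, with `U` the set of non-leaf vertices,
the minimizers of `S ↦ |S| + 3n - c(S)` are exactly the `n` sets `U ∖ {vᵢ}`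
together with `U`, all attaining the minimum value
`(n-1) + 3n - (2n-1) = 2n`. -/
theorem stmt17 (n : ℕ) (hn : 1 ≤ n) :
    (∀ S : Finset (Fin n ⊕ Fin n × Fin 2),
      2 * (n : ℤ) ≤ (S.card : ℤ) + 3 * n - numComp (hornedCompleteGraph n) S) ∧
    (∀ S : Finset (Fin n ⊕ Fin n × Fin 2),
      (S.card : ℤ) + 3 * n - numComp (hornedCompleteGraph n) S = 2 * (n : ℤ) ↔
        S = Finset.univ.image Sum.inl ∨
        ∃ i : Fin n, S = (Finset.univ.image Sum.inl).erase (Sum.inl i)) :=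
  ⟨fun S => (HornedAux.master hn S).1, fun S => (HornedAux.master hn S).2⟩
end
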